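/- If x is a positive integer that is smaller than every prime factor of a₁ and x ≤ a₁ − 1, then ⌊ω_x/a₁⌋ ≤ x·⌊ω₁/a₁⌋ + x − 1. -/

import Mathlib

/-!
The multiples `0, ω₁, 2ω₁, …, xω₁` all lie in `S`, and they are pairwise incongruent modulo `a₁`:
`a₁ ∣ (k - j) ω₁` with `0 < k - j ≤ x` would force `a₁ ∣ ω₁`, since `k - j` is smaller than every
prime factor of `a₁`. Their Apéry representatives are therefore `x + 1` distinct Apéry elements,
each at most `xω₁`, so the `x`-th smallest Apéry element satisfies `ω_x ≤ xω₁`. Dividing by `a₁`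
gives the bound, since `⌊xω₁/a₁⌋ < x⌊ω₁/a₁⌋ + x`.
-/

open Set

-- `w - n ∉ S`, phrased without truncated subtraction.
def apery (S : AddSubmonoid ℕ) (n : ℕ) : Set ℕ := {w ∈ S | ¬∃ s ∈ S, s + n = w}

section Apery

variable {S : AddSubmonoid ℕ} {n : ℕ}

theorem exists_mem_apery_le_modEq (hn : 0 < n) {m : ℕ} (hm : m ∈ S) :
    ∃ w ∈ apery S n, w ≤ m ∧ w ≡ m [MOD n] := by
  classical
  have hex : ∃ w, w ∈ S ∧ w ≡ m [MOD n] := ⟨m, hm, rfl⟩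
  obtain ⟨hwS, hwm⟩ := Nat.find_spec hex
  refine ⟨Nat.find hex, ⟨hwS, ?_⟩, Nat.find_min' hex ⟨hm, rfl⟩, hwm⟩
  rintro ⟨s, hs, hsw⟩
  have hsm : s ≡ m [MOD n] := Nat.add_modEq_right.symm.trans (hsw ▸ hwm)
  exact Nat.find_min hex (by omega) ⟨hs, hsm⟩

theorem not_dvd_of_mem_apery (hnS : n ∈ S) {w : ℕ} (hw : w ∈ apery S n) (hw0 : w ≠ 0) :
    ¬n ∣ w := by
  rintro ⟨k, rfl⟩
  obtain ⟨t, rfl⟩ : ∃ t, k = t + 1 := ⟨k - 1, by grind⟩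
  exact hw.2 ⟨t • n, S.nsmul_mem hnS t, by rw [smul_eq_mul]; ring⟩

end Apery

theorem not_mul_modEq_mul_of_lt_minFac {n m j k : ℕ} (hm : ¬n ∣ m) (hjk : j < k)
    (hk : k < n.minFac) : ¬j * m ≡ k * m [MOD n] := by
  intro h
  have hdvd : n ∣ (k - j) * m := by
    rw [Nat.sub_mul]
    exact (Nat.modEq_iff_dvd' (by gcongr)).mp h
  exact hm ((Nat.coprime_of_lt_minFac (by omega) (by omega)).dvd_of_dvd_mul_left hdvd)

theorem exists_le_apply_of_injOn {f : ℕ → ℕ} {x : ℕ} (hf : InjOn f (Iic x)) :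
    ∃ k ≤ x, x ≤ f k := by
  by_contra! h
  have hmaps : MapsTo f (Finset.range (x + 1)) (Finset.range x) := by
    intro k hk
    simp only [Finset.coe_range, mem_Iio] at hk ⊢
    exact h k (by omega)
  obtain ⟨j, hj, k, hk, hne, hjk⟩ :=
    Finset.exists_ne_map_eq_of_card_lt_of_maps_to (by simp) hmaps
  rw [Finset.mem_range] at hj hk
  exact hne (hf (Nat.le_of_lt_succ hj) (Nat.le_of_lt_succ hk) hjk)

theorem apery_le_mul {S : AddSubmonoid ℕ} {n m x : ℕ} {ω : ℕ → ℕ}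
    (hω : StrictMonoOn ω (Iio n)) (hap : ω '' Iio n = apery S n) (hm : m ∈ S) (hnm : ¬n ∣ m)
    (hx : x < n.minFac) (hn : 0 < n) : ω x ≤ x * m := by
  have hrep : ∀ k, ∃ i < n, ω i ≤ k * m ∧ ω i ≡ k * m [MOD n] := by
    intro k
    obtain ⟨w, hw, hwle, hwm⟩ := exists_mem_apery_le_modEq hn (S.nsmul_mem hm k)
    obtain ⟨i, hi, rfl⟩ : w ∈ ω '' Iio n := hap ▸ hw
    exact ⟨i, hi, hwle, hwm⟩
  choose f hfn hfle hfm using hrep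
  have hinj : InjOn f (Iic x) := by
    intro j hj k hk hjk
    have hjk' : j * m ≡ k * m [MOD n] := (hfm j).symm.trans (hjk ▸ hfm k)
    by_contra hne
    rcases Nat.lt_or_gt_of_ne hne with h | h
    · exact not_mul_modEq_mul_of_lt_minFac hnm h (lt_of_le_of_lt hk hx) hjk'
    · exact not_mul_modEq_mul_of_lt_minFac hnm h (lt_of_le_of_lt hj hx) hjk'.symm
  obtain ⟨k, hkx, hxk⟩ := exists_le_apply_of_injOn hinj
  calc ω x ≤ ω (f k) := hω.monotoneOn (lt_of_lt_of_le hx (Nat.minFac_le hn)) (hfn k) hxk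
    _ ≤ k * m := hfle k
    _ ≤ x * m := by gcongr

theorem mul_div_lt_mul_div_add_self {n m x : ℕ} (hn : 0 < n) (hx : 0 < x) :
    x * m / n < x * (m / n) + x := by
  rw [Nat.div_lt_iff_lt_mul hn, ← mul_add_one, mul_assoc]
  exact Nat.mul_lt_mul_of_pos_left (by simpa [add_mul] using Nat.lt_div_mul_add (a := m) hn) hx

theorem stmt6
    (d : ℕ) (hd : 2 ≤ d)
    (a : Fin d → ℕ)
    (a1 : ℕ) (ha1 : a1 = a ⟨0, by omega⟩)
    (S : Set ℕ)
    (hS : S = {m : ℕ | ∃ c : Fin d → ℕ, m = ∑ i, c i * a i})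
    (ω : ℕ → ℕ)
    (hω_mono : ∀ i j : ℕ, i < j → j < a1 → ω i < ω j)
    (hω_range : ω '' Set.Iio a1 = {w ∈ S | ¬ ∃ s ∈ S, s + a1 = w})
    (x : ℕ) (hx : 0 < x) (hxp : ∀ p : ℕ, p.Prime → p ∣ a1 → x < p)
    (hxa : x ≤ a1 - 1)
    :
    ((ω x / a1 : ℕ) : ℤ) ≤ (x : ℤ) * ((ω 1 / a1 : ℕ) : ℤ) + (x : ℤ) - 1 := by
  set T := (Submodule.span ℕ (range a)).toAddSubmonoid
  have hST : S = T := by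
    ext m
    simp [hS, T, Submodule.mem_span_range_iff_exists_fun, eq_comm]
  have hap : ω '' Iio a1 = apery T a1 := by rw [hω_range, hST]; rfl
  have ha1T : a1 ∈ T := ha1 ▸ Submodule.subset_span (mem_range_self _)
  have hn : 0 < a1 := by omega
  have hω1 : ω 1 ∈ apery T a1 := hap ▸ mem_image_of_mem ω (by simp; omega)
  have hω1_ne : ω 1 ≠ 0 := by have := hω_mono 0 1; omega
  have hxmin : x < a1.minFac := hxp _ (Nat.minFac_prime (by omega)) (Nat.minFac_dvd a1)
  have hle : ω x ≤ x * ω 1 :=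
    apery_le_mul (fun i _ j hj hij => hω_mono i j hij hj) hap hω1.1
      (not_dvd_of_mem_apery ha1T hω1 hω1_ne) hxmin hn
  have hlt : ω x / a1 < x * (ω 1 / a1) + x :=
    (Nat.div_le_div_right hle).trans_lt (mul_div_lt_mul_div_add_self hn hx)
  generalize ω x / a1 = p, ω 1 / a1 = q at hlt ⊢
  omega
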